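/- Let K be a field, n a natural number, S an (n+1)×(n+1) matrix over K, and j an index such that the j-th column of S is zero (S i j = 0 for all i). Then for every μ ∈ K with μ ≠ 0, μ is an eigenvalue of S (i.e., belongs to the spectrum of S) if and only if μ is an eigenvalue of the n×n matrix obtained from S by deleting row j and column j. -/
import Mathlib


theorem stmt_5 (K : Type*) [Field K] (n : ℕ)
    (S : Matrix (Fin (n + 1)) (Fin (n + 1)) K) (j : Fin (n + 1))
    (hcol : ∀ i, S i j = 0) (μ : K) (hμ : μ ≠ 0) :
    μ ∈ spectrum K S ↔ μ ∈ spectrum K (S.submatrix j.succAbove j.succAbove) := by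
  set M := algebraMap K (Matrix (Fin (n + 1)) (Fin (n + 1)) K) μ - S with hM
  have hminor : M.submatrix j.succAbove j.succAbove
      = algebraMap K (Matrix (Fin n) (Fin n) K) μ - S.submatrix j.succAbove j.succAbove := by
    ext a b
    simp [hM, Matrix.algebraMap_matrix_apply, Matrix.submatrix_apply,
      (Fin.succAbove_right_injective (p := j)).eq_iff]
  have hdet : M.det = μ * (M.submatrix j.succAbove j.succAbove).det := by
    rw [Matrix.det_succ_column _ j, Finset.sum_eq_single j]
    · have : M j j = μ := by
        simp [hM, Matrix.algebraMap_matrix_apply, hcol]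
      rw [this, Even.neg_one_pow ⟨(j : ℕ), rfl⟩]
      ring
    · intro i _ hij
      have : M i j = 0 := by
        simp [hM, Matrix.algebraMap_matrix_apply, hcol, Fin.val_eq_val, hij]
      simp [this]
    · simp
  simp only [spectrum.mem_iff, Matrix.isUnit_iff_isUnit_det, isUnit_iff_ne_zero, not_not, ← hM,
    hdet, hminor, mul_eq_zero, hμ, false_or]
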